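/- arXiv:0709.1235 — 2 statements merged into one kernel-verified Lean document; each statement's English description precedes it below -/
import Mathlib

section
/- Let 0 < α ≤ ∞ and let f be a real function on (-α,α). Then f is S-positive of order 2 if and only if the following three conditions hold: the restriction of f to (0,α) is nonnegative, non-decreasing, and √-submultiplicative; 0 ≤ f(0) and f(0) ≤ f(0+) where f(0+) := lim_{t↘0} f(t) (this limit exists); and |f(-t)| ≤ f(t) for all t ∈ (0,α). -/
open Matrix

/-- `x` lies in the open interval `(-a, a)`, where `a ∈ (0, ∞]` is an extended real. -/
def MemI (a : EReal) (x : ℝ) : Prop := -a < (x : EReal) ∧ (x : EReal) < a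

/-- `x` lies in the open interval `(0, a)`. -/
def MemP (a : EReal) (x : ℝ) : Prop := 0 < x ∧ (x : EReal) < a

/-- All entries of the matrix `A` lie in `(-a, a)`. -/
def EntriesIn (a : EReal) {n : ℕ} (A : Matrix (Fin n) (Fin n) ℝ) : Prop :=
  ∀ i j, MemI a (A i j)

/-- `f` is S-positive (Schur positive) of order `n` on `(-a, a)`. -/
def SPos (a : EReal) (f : ℝ → ℝ) (n : ℕ) : Prop :=
  ∀ A : Matrix (Fin n) (Fin n) ℝ, EntriesIn a A → A.PosSemidef → (A.map f).PosSemidef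

/-- `f` is S-monotone (Schur monotone) of order `n` on `(-a, a)`. -/
def SMono (a : EReal) (f : ℝ → ℝ) (n : ℕ) : Prop :=
  ∀ A B : Matrix (Fin n) (Fin n) ℝ, A.IsSymm → B.IsSymm →
    EntriesIn a A → EntriesIn a B →
    B.PosSemidef → (A - B).PosSemidef →
    (A.map f - B.map f).PosSemidef

/-- `f` is S-convex (Schur convex) of order `n` on `(-a, a)`. -/
def SConv (a : EReal) (f : ℝ → ℝ) (n : ℕ) : Prop :=
  ∀ A B : Matrix (Fin n) (Fin n) ℝ, A.IsSymm → B.IsSymm →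
    EntriesIn a A → EntriesIn a B →
    B.PosSemidef → (A - B).PosSemidef →
    ∀ t : ℝ, 0 ≤ t → t ≤ 1 →
    (t • A.map f + (1 - t) • B.map f - (t • A + (1 - t) • B).map f).PosSemidef

/-!
A symmetric matrix `!![x, y; y, z]` is positive semidefinite iff `0 ≤ x`, `0 ≤ z` and
`y ^ 2 ≤ x * z`, so S-positivity of order 2 says exactly that `f` preserves such triples.
The triples `(t, t, t)`, `(x, x, y)` with `x ≤ y`, `(s, √(s t), t)` and `(t, -t, t)` give
nonnegativity, monotonicity, √-submultiplicativity and `|f (-t)| ≤ f t`; monotonicity and the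
lower bound `f 0` give the right limit at `0`. Conversely, for `y ≠ 0` one chains
`|f y| ≤ f |y| ≤ f √(x z) ≤ √(f x * f z)`, while `y = 0` only needs `f 0 ≤ f(0+) ≤ f x, f z`.
-/

open Filter Topology

theorem quadratic_form_nonneg {p q r : ℝ} (hp : 0 ≤ p) (hr : 0 ≤ r) (hq : q ^ 2 ≤ p * r)
    (x y : ℝ) : 0 ≤ p * x ^ 2 + 2 * q * x * y + r * y ^ 2 := by
  rcases hp.eq_or_lt with rfl | hp
  · have hq0 : q = 0 := by nlinarith
    simp only [hq0, zero_mul, mul_zero, zero_add]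
    positivity
  · -- `p (p x² + 2 q x y + r y²) = (p x + q y)² + (p r - q²) y²`
    refine nonneg_of_mul_nonneg_right ?_ hp
    nlinarith [sq_nonneg (p * x + q * y), mul_nonneg (sub_nonneg.2 hq) (sq_nonneg y)]

namespace Matrix

theorem posSemidef_fin_two_iff (M : Matrix (Fin 2) (Fin 2) ℝ) :
    M.PosSemidef ↔ M 1 0 = M 0 1 ∧ 0 ≤ M 0 0 ∧ 0 ≤ M 1 1 ∧ M 0 1 ^ 2 ≤ M 0 0 * M 1 1 := by
  constructor
  · intro hM
    have hsym : M 1 0 = M 0 1 := by simpa using hM.isHermitian.apply 0 1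
    have hdet := hM.det_nonneg
    rw [det_fin_two, hsym] at hdet
    exact ⟨hsym, hM.diag_nonneg, hM.diag_nonneg, by nlinarith⟩
  · rintro ⟨hsym, h00, h11, hdet⟩
    refine .of_dotProduct_mulVec_nonneg ?_ fun x => ?_
    · ext i j
      fin_cases i <;> fin_cases j <;> simp [hsym]
    · have := quadratic_form_nonneg h00 h11 hdet (x 0) (x 1)
      simp only [dotProduct, mulVec, Fin.sum_univ_two, hsym, star_trivial]
      linarith

end Matrix

section Interval

variable {a : EReal} {s t x : ℝ}

theorem memI_iff_abs_lt : MemI a x ↔ ((|x| : ℝ) : EReal) < a := by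
  rw [MemI, abs_eq_max_neg, EReal.coe_strictMono.monotone.map_max, max_lt_iff, EReal.neg_lt_comm,
    EReal.coe_neg, and_comm]

theorem memI_iff_of_nonneg (hx : 0 ≤ x) : MemI a x ↔ (x : EReal) < a := by
  rw [memI_iff_abs_lt, abs_of_nonneg hx]

theorem memI_neg_iff : MemI a (-x) ↔ MemI a x := by
  rw [memI_iff_abs_lt, memI_iff_abs_lt, abs_neg]

theorem memI_zero (ha : 0 < a) : MemI a 0 :=
  (memI_iff_of_nonneg le_rfl).2 (mod_cast ha)

theorem MemP.memI (ht : MemP a t) : MemI a t :=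
  (memI_iff_of_nonneg ht.1.le).2 ht.2

theorem MemI.of_abs_le (ht : MemI a t) (hst : |s| ≤ |t|) : MemI a s :=
  memI_iff_abs_lt.2 <| (EReal.coe_le_coe_iff.2 hst).trans_lt (memI_iff_abs_lt.1 ht)

theorem MemI.memP_abs (hx : MemI a x) (hx0 : x ≠ 0) : MemP a |x| :=
  ⟨abs_pos.2 hx0, memI_iff_abs_lt.1 hx⟩

theorem MemP.sqrt_mul (hs : MemP a s) (ht : MemP a t) : MemP a √(s * t) := by
  refine ⟨Real.sqrt_pos.2 (mul_pos hs.1 ht.1), ?_⟩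
  have hle : √(s * t) ≤ max s t := by
    rw [Real.sqrt_le_left (le_max_of_le_left hs.1.le), sq]
    exact mul_le_mul (le_max_left _ _) (le_max_right _ _) ht.1.le (hs.1.le.trans (le_max_left _ _))
  exact (EReal.coe_le_coe_iff.2 hle).trans_lt <| by
    rw [EReal.coe_strictMono.monotone.map_max]; exact max_lt hs.2 ht.2

end Interval

theorem sPos_two_iff {a : EReal} {f : ℝ → ℝ} :
    SPos a f 2 ↔ ∀ x y z, MemI a x → MemI a y → MemI a z → 0 ≤ x → 0 ≤ z → y ^ 2 ≤ x * z →
      0 ≤ f x ∧ 0 ≤ f z ∧ f y ^ 2 ≤ f x * f z := by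
  constructor
  · intro hf x y z hx hy hz hx0 hz0 hxz
    have hA : (!![x, y; y, z]).PosSemidef :=
      (posSemidef_fin_two_iff _).2 (by simpa using ⟨hx0, hz0, hxz⟩)
    have hent : EntriesIn a !![x, y; y, z] := by
      intro i j
      fin_cases i <;> fin_cases j <;> assumption
    simpa using ((posSemidef_fin_two_iff _).1 (hf _ hent hA)).2
  · intro hf A hA hpsd
    obtain ⟨hsym, h00, h11, hdet⟩ := (posSemidef_fin_two_iff A).1 hpsd
    obtain ⟨h1, h2, h3⟩ := hf _ _ _ (hA 0 0) (hA 0 1) (hA 1 1) h00 h11 hdet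
    exact (posSemidef_fin_two_iff _).2 ⟨by simp [hsym], h1, h2, h3⟩

namespace SPos

variable {a : EReal} {f : ℝ → ℝ} (hf : SPos a f 2)
include hf

theorem nonneg_of_two {t : ℝ} (ht : MemI a t) (ht0 : 0 ≤ t) : 0 ≤ f t :=
  (sPos_two_iff.1 hf t t t ht ht ht ht0 ht0 (by ring_nf; rfl)).1

theorem le_of_two {x y : ℝ} (hy : MemI a y) (hx0 : 0 ≤ x) (hxy : x ≤ y) : f x ≤ f y := by
  have hx : MemI a x := hy.of_abs_le (abs_le_abs_of_nonneg hx0 hxy)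
  obtain ⟨hfx, hfy, hsq⟩ := sPos_two_iff.1 hf x x y hx hx hy hx0 (hx0.trans hxy) (by nlinarith)
  nlinarith

theorem sqrt_mul_le_of_two {s t : ℝ} (hs : MemP a s) (ht : MemP a t) :
    f √(s * t) ≤ √(f s * f t) := by
  have hst := hs.sqrt_mul ht
  obtain ⟨hfs, hft, hsq⟩ := sPos_two_iff.1 hf s _ t hs.memI hst.memI ht.memI hs.1.le ht.1.le
    (Real.sq_sqrt (mul_pos hs.1 ht.1).le).le
  exact Real.le_sqrt_of_sq_le hsq

theorem abs_neg_le_of_two {t : ℝ} (ht : MemI a t) (ht0 : 0 ≤ t) : |f (-t)| ≤ f t := by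
  obtain ⟨hft, -, hsq⟩ :=
    sPos_two_iff.1 hf t (-t) t ht (memI_neg_iff.2 ht) ht ht0 ht0 (by ring_nf; rfl)
  exact abs_le_of_sq_le_sq (by nlinarith) hft

end SPos

theorem MonotoneOn.exists_tendsto_nhdsGT_ge {f : ℝ → ℝ} {x y b : ℝ} (hxy : x < y)
    (hf : MonotoneOn f (Set.Ioo x y)) (hb : ∀ t ∈ Set.Ioo x y, b ≤ f t) :
    ∃ L, Tendsto f (𝓝[>] x) (𝓝 L) ∧ b ≤ L := by
  have hne : (Set.Ioo x y).Nonempty := Set.nonempty_Ioo.2 hxy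
  refine ⟨_, hf.tendsto_nhdsWithin_Ioo_right hne ⟨b, ?_⟩, le_csInf (hne.image f) ?_⟩ <;>
    rintro _ ⟨t, ht, rfl⟩ <;> exact hb t ht

theorem MonotoneOn.le_of_tendsto_nhdsGT {f : ℝ → ℝ} {s : Set ℝ} {x t L : ℝ}
    (hf : MonotoneOn f s) (hL : Tendsto f (𝓝[>] x) (𝓝 L)) (ht : t ∈ s) (hxt : x < t)
    (hs : Set.Ioo x t ⊆ s) : L ≤ f t := by
  refine le_of_tendsto hL ?_
  filter_upwards [Ioo_mem_nhdsGT hxt] with u hu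
  exact hf (hs hu) ht hu.2.le

theorem Ioo_subset_memP {a : EReal} {c : ℝ} (hc : (c : EReal) ≤ a) :
    Set.Ioo 0 c ⊆ {t | MemP a t} :=
  fun _ ht => ⟨ht.1, (EReal.coe_lt_coe_iff.2 ht.2).trans_le hc⟩

section Converse

variable {a : EReal} {f : ℝ → ℝ} (hnn : ∀ t, MemP a t → 0 ≤ f t)

include hnn in
theorem abs_apply_le_apply_abs (hneg : ∀ t, MemP a t → |f (-t)| ≤ f t) {y : ℝ} (hy : MemI a y)
    (hy0 : y ≠ 0) : |f y| ≤ f |y| := by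
  rcases hy0.lt_or_gt with hy0 | hy0
  · simpa [abs_of_neg hy0] using hneg |y| (hy.memP_abs hy0.ne)
  · rw [abs_of_pos hy0, abs_of_nonneg (hnn y ⟨hy0, (memI_iff_of_nonneg hy0.le).1 hy⟩)]

include hnn in
theorem sPos_two_of_monotoneOn (hmono : MonotoneOn f {t | MemP a t})
    (hsub : ∀ s t, MemP a s → MemP a t → f √(s * t) ≤ √(f s * f t))
    (hf0 : 0 ≤ f 0) (hf0le : ∀ t, MemP a t → f 0 ≤ f t)
    (hneg : ∀ t, MemP a t → |f (-t)| ≤ f t) : SPos a f 2 := by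
  have hf0le' : ∀ t, MemI a t → 0 ≤ t → f 0 ≤ f t := by
    intro t ht ht0
    rcases ht0.eq_or_lt with rfl | ht0
    · rfl
    · exact hf0le t ⟨ht0, (memI_iff_of_nonneg ht0.le).1 ht⟩
  rw [sPos_two_iff]
  intro x y z hx hy hz hx0 hz0 hxz
  refine ⟨hf0.trans (hf0le' x hx hx0), hf0.trans (hf0le' z hz hz0), ?_⟩
  rcases eq_or_ne y 0 with rfl | hy0
  · nlinarith [hf0le' x hx hx0, hf0le' z hz hz0]
  have hxz0 : 0 < x * z := (pow_pos (abs_pos.2 hy0) 2).trans_le (by simpa using hxz)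
  have hxP : MemP a x := ⟨pos_of_mul_pos_left hxz0 hz0, (memI_iff_of_nonneg hx0).1 hx⟩
  have hzP : MemP a z := ⟨pos_of_mul_pos_right hxz0 hx0, (memI_iff_of_nonneg hz0).1 hz⟩
  have hxzP := hxP.sqrt_mul hzP
  have hfy : |f y| ≤ f √(x * z) :=
    (abs_apply_le_apply_abs hnn hneg hy hy0).trans
      (hmono (hy.memP_abs hy0) hxzP (Real.abs_le_sqrt hxz))
  calc f y ^ 2 = |f y| ^ 2 := (sq_abs _).symm
    _ ≤ f √(x * z) ^ 2 := pow_le_pow_left₀ (abs_nonneg _) hfy 2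
    _ ≤ f x * f z :=
      (Real.le_sqrt (hnn _ hxzP) (mul_nonneg (hnn x hxP) (hnn z hzP))).1 (hsub x z hxP hzP)

end Converse

/-- Proposition 2.2: `f` is S-positive of order 2 on `(-α, α)` iff `f` restricted to `(0, α)`
is nonnegative, non-decreasing and √-submultiplicative, `0 ≤ f(0) ≤ f(0+)` (the right limit
at `0` exists), and `|f(-t)| ≤ f(t)` for all `t ∈ (0, α)`. -/
theorem stmt_2 (a : EReal) (ha : 0 < a) (f : ℝ → ℝ) :
    SPos a f 2 ↔
      ((∀ t, MemP a t → 0 ≤ f t) ∧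
       MonotoneOn f {t | MemP a t} ∧
       (∀ s t, MemP a s → MemP a t →
          f (Real.sqrt (s * t)) ≤ Real.sqrt (f s * f t)) ∧
       0 ≤ f 0 ∧
       (∃ L : ℝ, Filter.Tendsto f (nhdsWithin 0 (Set.Ioi 0)) (nhds L) ∧ f 0 ≤ L) ∧
       (∀ t, MemP a t → |f (-t)| ≤ f t)) := by
  constructor
  · intro hf
    have hmono : MonotoneOn f {t | MemP a t} := fun x hx _ hy hxy =>
      hf.le_of_two hy.memI hx.1.le hxy
    obtain ⟨c, hc0, hca⟩ := EReal.exists_between_coe_real ha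
    have hc : Set.Ioo 0 c ⊆ {t | MemP a t} := Ioo_subset_memP hca.le
    refine ⟨fun t ht => hf.nonneg_of_two ht.memI ht.1.le, hmono,
      fun s t hs ht => hf.sqrt_mul_le_of_two hs ht, hf.nonneg_of_two (memI_zero ha) le_rfl,
      (hmono.mono hc).exists_tendsto_nhdsGT_ge (mod_cast hc0)
        fun t ht => hf.le_of_two (hc ht).memI le_rfl ht.1.le,
      fun t ht => hf.abs_neg_le_of_two ht.memI ht.1.le⟩
  · rintro ⟨hnn, hmono, hsub, hf0, ⟨L, hL, hf0L⟩, hneg⟩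
    refine sPos_two_of_monotoneOn hnn hmono hsub hf0 (fun t ht => ?_) hneg
    exact hf0L.trans (hmono.le_of_tendsto_nhdsGT hL ht ht.1 (Ioo_subset_memP ht.2.le))
end

section
/- Let 0 < α ≤ ∞, n ∈ ℕ with n ≥ 2, and let f be a real function on (-α,α). Then f is S-convex of order n if and only if f is differentiable on (-α,α) and its derivative f' is S-monotone of order n. -/
/-!
Write `q(s) = vᵀ f[P + s D] v` for `P, D ≥ 0`. S-convexity of `f` says exactly that all these
functions are convex in `s ≥ 0`. When `f` is differentiable, `q'(s) = vᵀ (f'[P + s D] ⊙ D) v`, so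
by the Schur product theorem S-monotonicity of `f'` makes every `q'` monotone, whence `f` is
S-convex. Conversely, monotonicity of `q'` along the all-ones direction `J` gives
`f'[P + h J] ≥ f'[P]`; pushing this along the segment from `B` to `A` (Schur again) compares the
increments of `t ↦ f[A + t J]` and `t ↦ f[B + t J]`, and letting `t → 0` gives `f'[A] ≥ f'[B]`.

Differentiability comes from the padded `2 × 2` test matrices `!![x, u; u, x] ≥ !![y, v; v, y]`:
the convexity gap of `f` at `(u, v)` is dominated by the one at `(x, y)`. Hence `f(· + d) ± f`
are convex, so `f` has right derivatives, and the symmetric second difference of `f` at `c` is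
dominated by a forward second difference further right, which is `o(h)`.
-/

open Matrix

open Set Filter Topology

lemma MemI.of_abs_le_s8 {a : EReal} {β x : ℝ} (hβ : MemI a β) (h : |x| ≤ β) : MemI a x := by
  refine ⟨?_, lt_of_le_of_lt (EReal.coe_le_coe_iff.mpr (le_of_abs_le h)) hβ.2⟩
  calc -a < ((-β : ℝ) : EReal) := by rw [EReal.coe_neg]; exact EReal.neg_lt_neg_iff.mpr hβ.2
    _ ≤ x := EReal.coe_le_coe_iff.mpr (neg_le_of_abs_le h)

lemma MemI.exists_abs_lt {a : EReal} {c : ℝ} (hc : MemI a c) : ∃ β, |c| < β ∧ MemI a β := by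
  have hca : ((|c| : ℝ) : EReal) < a := by
    rcases abs_choice c with h | h <;> rw [h]
    · exact hc.2
    · rw [EReal.coe_neg, EReal.neg_lt_comm]; exact hc.1
  obtain ⟨β, hcβ, hβa⟩ := EReal.lt_iff_exists_real_btwn.mp hca
  have hcβ : |c| < β := EReal.coe_lt_coe_iff.mp hcβ
  exact ⟨β, hcβ, lt_trans hc.1 (EReal.coe_lt_coe_iff.mpr ((le_abs_self c).trans_lt hcβ)), hβa⟩

lemma isOpen_setOf_memI (a : EReal) : IsOpen {x : ℝ | MemI a x} :=
  isOpen_Ioo.preimage continuous_coe_real_ereal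

lemma convex_setOf_memI (a : EReal) : Convex ℝ {x : ℝ | MemI a x} :=
  (ordConnected_Ioo.preimage_mono fun _ _ h => EReal.coe_le_coe_iff.mpr h).convex

lemma convex_setOf_entriesIn (a : EReal) (n : ℕ) :
    Convex ℝ {A : Matrix (Fin n) (Fin n) ℝ | EntriesIn a A} :=
  fun _ hA _ hB _ _ hs ht hst i j => convex_setOf_memI a (hA i j) (hB i j) hs ht hst

lemma EntriesIn.eventually_add_smul {a : EReal} {n : ℕ} {A : Matrix (Fin n) (Fin n) ℝ}
    (hA : EntriesIn a A) (D : Matrix (Fin n) (Fin n) ℝ) :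
    ∀ᶠ h in 𝓝 (0 : ℝ), EntriesIn a (A + h • D) := by
  simp only [EntriesIn, eventually_all]
  intro i j
  have hcont : Continuous fun h : ℝ => A i j + h * D i j := by fun_prop
  exact hcont.continuousAt.preimage_mem_nhds
    ((isOpen_setOf_memI a).mem_nhds (by simpa using hA i j))

lemma EntriesIn.add_smul_sub_add_smul {a : EReal} {n : ℕ} {A B D : Matrix (Fin n) (Fin n) ℝ}
    (hA : EntriesIn a A) (hB : EntriesIn a B) {t : ℝ} (hAt : EntriesIn a (A + t • D))
    (hBt : EntriesIn a (B + t • D)) (ht : 0 < t) {s r : ℝ} (hs : s ∈ Icc 0 1)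
    (hr : r ∈ Icc 0 t) : EntriesIn a (B + s • (A - B) + r • D) := by
  have hconv := convex_setOf_entriesIn a n
  have h₀ : EntriesIn a (B + s • (A - B)) := hconv.add_smul_sub_mem hB hA hs
  have h₁ : EntriesIn a (B + s • (A - B) + t • D) := by
    have := hconv.add_smul_sub_mem hBt hAt hs
    rwa [show B + t • D + s • (A + t • D - (B + t • D)) = B + s • (A - B) + t • D by module]
      at this
  have := hconv.add_smul_sub_mem h₀ h₁ ⟨div_nonneg hr.1 ht.le, div_le_one_of_le₀ hr.2 ht.le⟩
  rwa [add_sub_cancel_left, smul_smul, div_mul_cancel₀ r ht.ne'] at this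

section Matrix

variable {ι α : Type*}

lemma Matrix.sub_hadamard [NonUnitalNonAssocRing α] (A B C : Matrix ι ι α) :
    (A - B) ⊙ C = A ⊙ C - B ⊙ C := by
  ext i j; simp [sub_mul]

lemma Matrix.IsSymm.hadamard [Mul α] {A B : Matrix ι ι α} (hA : A.IsSymm) (hB : B.IsSymm) :
    (A ⊙ B).IsSymm := by
  rw [IsSymm, transpose_hadamard, hA.eq, hB.eq]

variable {A D : Matrix ι ι ℝ}

lemma Matrix.PosSemidef.isSymm_of_real (hA : A.PosSemidef) : A.IsSymm :=
  isHermitian_iff_isSymm.mp hA.isHermitian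

lemma Matrix.PosSemidef.dotProduct_mulVec_nonneg_of_real [Fintype ι] (hA : A.PosSemidef)
    (v : ι → ℝ) : 0 ≤ v ⬝ᵥ (A *ᵥ v) := by
  simpa using hA.dotProduct_mulVec_nonneg v

lemma Matrix.posSemidef_of_isSymm_of_dotProduct_mulVec_nonneg [Fintype ι] (hA : A.IsSymm)
    (h : ∀ v, 0 ≤ v ⬝ᵥ (A *ᵥ v)) : A.PosSemidef :=
  .of_dotProduct_mulVec_nonneg (isHermitian_iff_isSymm.mpr hA) (by simpa using h)

lemma Matrix.posSemidef_of_one [Fintype ι] : (of 1 : Matrix ι ι ℝ).PosSemidef := by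
  rw [show (of 1 : Matrix ι ι ℝ) = vecMulVec 1 (star 1) by ext; simp [vecMulVec]]
  exact posSemidef_vecMulVec_self_star 1

lemma Matrix.PosSemidef.add_smul_sub_add_smul (hD : D.PosSemidef) (P : Matrix ι ι ℝ) {s r : ℝ}
    (h : s ≤ r) : (P + r • D - (P + s • D)).PosSemidef := by
  rw [show P + r • D - (P + s • D) = (r - s) • D by module]
  exact hD.smul (sub_nonneg.mpr h)

end Matrix

section TwoByTwo

variable {ι : Type*} [DecidableEq ι] (i₀ i₁ : ι)

/-- `!![x, u; u, x]` in rows and columns `i₀, i₁` and zero elsewhere, as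
`((x + u) / 2) w wᵀ + ((x - u) / 2) z zᵀ` with `w = e₀ + e₁` and `z = e₀ - e₁`. -/
noncomputable def twoByTwo (x u : ℝ) : Matrix ι ι ℝ :=
  ((x + u) / 2) • vecMulVec (Pi.single i₀ 1 + Pi.single i₁ 1) (Pi.single i₀ 1 + Pi.single i₁ 1) +
    ((x - u) / 2) • vecMulVec (Pi.single i₀ 1 - Pi.single i₁ 1) (Pi.single i₀ 1 - Pi.single i₁ 1)

lemma twoByTwo_sub (x u y v : ℝ) :
    twoByTwo i₀ i₁ x u - twoByTwo i₀ i₁ y v = twoByTwo i₀ i₁ (x - y) (u - v) := by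
  unfold twoByTwo
  module

variable {i₀ i₁}

lemma posSemidef_twoByTwo [Fintype ι] {x u : ℝ} (hu : |u| ≤ x) :
    (twoByTwo i₀ i₁ x u).PosSemidef := by
  have hpsd (w : ι → ℝ) : (vecMulVec w w).PosSemidef := by
    simpa using posSemidef_vecMulVec_self_star w
  obtain ⟨h₁, h₂⟩ := abs_le.mp hu
  exact ((hpsd _).smul (by linarith)).add ((hpsd _).smul (by linarith))

lemma abs_twoByTwo_apply_le (h : i₀ ≠ i₁) {x u : ℝ} (hu : |u| ≤ x) (i j : ι) :
    |twoByTwo i₀ i₁ x u i j| ≤ x := by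
  have hbound (k : ι) : |(Pi.single i₀ 1 + Pi.single i₁ 1 : ι → ℝ) k| ≤ 1 ∧
      |(Pi.single i₀ 1 - Pi.single i₁ 1 : ι → ℝ) k| ≤ 1 := by
    rcases eq_or_ne k i₀ with rfl | h₀
    · simp [h]
    rcases eq_or_ne k i₁ with rfl | h₁
    · simp [h₀]
    simp [h₀, h₁]
  have hprod (w : ι → ℝ) (hw : ∀ k, |w k| ≤ 1) : |w i * w j| ≤ 1 := by
    rw [abs_mul]; exact mul_le_one₀ (hw i) (abs_nonneg _) (hw j)
  obtain ⟨h₁, h₂⟩ := abs_le.mp hu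
  calc |twoByTwo i₀ i₁ x u i j|
      ≤ (x + u) / 2 * 1 + (x - u) / 2 * 1 := by
        simp only [twoByTwo, Matrix.add_apply, Matrix.smul_apply, vecMulVec_apply, smul_eq_mul]
        refine (abs_add_le _ _).trans (add_le_add ?_ ?_) <;>
          rw [abs_mul, abs_of_nonneg (by linarith)]
        · exact mul_le_mul_of_nonneg_left (hprod _ fun k => (hbound k).1) (by linarith)
        · exact mul_le_mul_of_nonneg_left (hprod _ fun k => (hbound k).2) (by linarith)
    _ = x := by ring

lemma twoByTwo_apply_of_ne (h : i₀ ≠ i₁) (x u : ℝ) :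
    twoByTwo i₀ i₁ x u i₀ i₀ = x ∧ twoByTwo i₀ i₁ x u i₀ i₁ = u ∧
      twoByTwo i₀ i₁ x u i₁ i₀ = u ∧ twoByTwo i₀ i₁ x u i₁ i₁ = x := by
  refine ⟨?_, ?_, ?_, ?_⟩ <;> simp [twoByTwo, vecMulVec_apply, h, h.symm] <;> ring

lemma dotProduct_mulVec_add_single [Fintype ι] (M : Matrix ι ι ℝ) :
    (Pi.single i₀ 1 + Pi.single i₁ 1) ⬝ᵥ (M *ᵥ (Pi.single i₀ 1 + Pi.single i₁ 1)) =
      M i₀ i₀ + M i₀ i₁ + M i₁ i₀ + M i₁ i₁ := by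
  simp [mulVec_add, add_dotProduct, dotProduct_add]
  ring

lemma dotProduct_mulVec_sub_single [Fintype ι] (M : Matrix ι ι ℝ) :
    (Pi.single i₀ 1 - Pi.single i₁ 1) ⬝ᵥ (M *ᵥ (Pi.single i₀ 1 - Pi.single i₁ 1)) =
      M i₀ i₀ - M i₀ i₁ - M i₁ i₀ + M i₁ i₁ := by
  simp [mulVec_sub, sub_dotProduct, dotProduct_sub]
  ring

end TwoByTwo

section Ray

variable {ι : Type*} [Fintype ι]

noncomputable def quadOnRay (f : ℝ → ℝ) (P D : Matrix ι ι ℝ) (v : ι → ℝ) (s : ℝ) : ℝ :=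
  v ⬝ᵥ ((P + s • D).map f *ᵥ v)

lemma hasDerivAt_quadOnRay {f : ℝ → ℝ} {P D : Matrix ι ι ℝ} (v : ι → ℝ) {s : ℝ}
    (hf : ∀ i j, DifferentiableAt ℝ f ((P + s • D) i j)) :
    HasDerivAt (quadOnRay f P D v) (v ⬝ᵥ (((P + s • D).map (deriv f) ⊙ D) *ᵥ v)) s := by
  have hexpand (M : Matrix ι ι ℝ) : v ⬝ᵥ (M *ᵥ v) = ∑ i, ∑ j, v i * M i j * v j := by
    simp [dotProduct, mulVec, Finset.mul_sum, mul_assoc]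
  unfold quadOnRay
  simp only [hexpand]
  refine HasDerivAt.fun_sum fun i _ => HasDerivAt.fun_sum fun j _ => ?_
  have hentry : HasDerivAt (fun s => P i j + s * D i j) (D i j) s := by
    simpa using ((hasDerivAt_id s).mul_const (D i j)).const_add (P i j)
  have hf' : HasDerivAt f (deriv f (P i j + s * D i j)) (P i j + s * D i j) := by
    simpa using (hf i j).hasDerivAt
  simpa [mul_assoc] using ((hf'.comp s hentry).const_mul (v i)).mul_const (v j)

end Ray

lemma HasDerivWithinAt.tendsto_slope_zero_right {f : ℝ → ℝ} {x L : ℝ}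
    (hf : HasDerivWithinAt f L (Ioi x) x) :
    Tendsto (fun h => (f (x + h) - f x) / h) (𝓝[>] 0) (𝓝 L) := by
  have hslope := (hasDerivWithinAt_iff_tendsto_slope' (lt_irrefl x)).mp hf
  have hshift : Tendsto (x + ·) (𝓝[>] 0) (𝓝[>] x) := by
    have hmap := Filter.map_add_left_nhdsGT (c := x) (a := (0 : ℝ))
    rw [add_zero] at hmap
    exact hmap.le
  exact (hslope.comp hshift).congr fun h => by simp [slope_def_field]

/-- The forward second difference at `y` is `o(h)`, so the symmetric one at `c` is too, which
makes the left slopes at `c` converge to the right derivative. -/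
lemma hasDerivAt_of_abs_symmDiff_le {f : ℝ → ℝ} {c y L : ℝ}
    (hc : HasDerivWithinAt f L (Ioi c) c) (hy : DifferentiableWithinAt ℝ f (Ioi y) y)
    (hle : ∀ᶠ h in 𝓝[>] 0,
      |f (c + h) + f (c - h) - 2 * f c| ≤ f (y + 2 * h) + f y - 2 * f (y + h)) :
    HasDerivAt f L c := by
  set D := fun h => (f (c + h) - f c) / h
  set E := fun h => (f (y + h) - f y) / h
  have hD : Tendsto D (𝓝[>] 0) (𝓝 L) := hc.tendsto_slope_zero_right
  have hE : Tendsto E (𝓝[>] 0) (𝓝 (derivWithin f (Ioi y) y)) :=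
    hy.hasDerivWithinAt.tendsto_slope_zero_right
  have hdouble : Tendsto (fun h : ℝ => 2 * h) (𝓝[>] 0) (𝓝[>] 0) :=
    tendsto_nhdsWithin_of_tendsto_nhds_of_eventually_within _
      (by simpa using (continuous_const_mul (2 : ℝ)).tendsto 0 |>.mono_left nhdsWithin_le_nhds)
      (eventually_nhdsWithin_of_forall fun _ hh => mem_Ioi.mpr (mul_pos two_pos hh))
  have hsecond : Tendsto (fun h => 2 * E (2 * h) - 2 * E h) (𝓝[>] 0) (𝓝 0) := by
    simpa using ((hE.comp hdouble).const_mul 2).sub (hE.const_mul 2)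
  have hsym : Tendsto (fun h => D h - D (-h)) (𝓝[>] 0) (𝓝 0) := by
    refine squeeze_zero_norm' ?_ hsecond
    filter_upwards [hle, self_mem_nhdsWithin] with h hh (hpos : 0 < h)
    have hD' : D h - D (-h) = (f (c + h) + f (c - h) - 2 * f c) / h := by
      simp only [D]; field_simp; ring_nf
    have hE' : 2 * E (2 * h) - 2 * E h = (f (y + 2 * h) + f y - 2 * f (y + h)) / h := by
      simp only [E]; field_simp; ring
    rw [Real.norm_eq_abs, hD', hE', abs_div, abs_of_pos hpos]
    exact div_le_div_of_nonneg_right hh hpos.le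
  have hleft : Tendsto (fun h => D (-h)) (𝓝[>] 0) (𝓝 L) := by
    simpa using hD.sub hsym
  have hleft' : Tendsto D (𝓝[<] 0) (𝓝 L) :=
    (hleft.comp (by simpa using tendsto_neg_nhdsLT (a := (0 : ℝ)))).congr fun h => by simp
  rw [hasDerivAt_iff_tendsto_slope_zero, ← nhdsLT_sup_nhdsGT, tendsto_sup]
  exact ⟨hleft'.congr fun h => by simp [D, div_eq_inv_mul],
    hD.congr fun h => by simp [D, div_eq_inv_mul]⟩

section SConv

variable {a : EReal} {n : ℕ} {f : ℝ → ℝ} {A B P D : Matrix (Fin n) (Fin n) ℝ}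

/-- S-convexity tested on `!![x, u; u, x] ≥ !![y, v; v, y] ≥ 0` against `(1, 1)` and `(1, -1)`. -/
lemma SConv.abs_gap_le (hf : SConv a f n) (hn : 2 ≤ n)
    {x y u v t : ℝ} (hv : |v| ≤ y) (huv : |u - v| ≤ x - y) (hx : MemI a x)
    (ht₀ : 0 ≤ t) (ht₁ : t ≤ 1) :
    |t * f u + (1 - t) * f v - f (t * u + (1 - t) * v)| ≤
      t * f x + (1 - t) * f y - f (t * x + (1 - t) * y) := by
  let i₀ : Fin n := ⟨0, by omega⟩
  let i₁ : Fin n := ⟨1, by omega⟩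
  have hi : i₀ ≠ i₁ := by simp [i₀, i₁, Fin.ext_iff]
  have hyx : y ≤ x := by linarith [abs_nonneg (u - v)]
  have hu : |u| ≤ x := by linarith [abs_sub_abs_le_abs_sub u v]
  have hA := posSemidef_twoByTwo (i₀ := i₀) (i₁ := i₁) hu
  have hB := posSemidef_twoByTwo (i₀ := i₀) (i₁ := i₁) hv
  have hAB : (twoByTwo i₀ i₁ x u - twoByTwo i₀ i₁ y v).PosSemidef := by
    rw [twoByTwo_sub]; exact posSemidef_twoByTwo huv
  have hN := hf _ _ hA.isSymm_of_real hB.isSymm_of_real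
    (fun i j => hx.of_abs_le_s8 (abs_twoByTwo_apply_le hi hu i j))
    (fun i j => hx.of_abs_le_s8 ((abs_twoByTwo_apply_le hi hv i j).trans hyx)) hB hAB t ht₀ ht₁
  have hw := hN.dotProduct_mulVec_nonneg_of_real (Pi.single i₀ 1 + Pi.single i₁ 1)
  have hz := hN.dotProduct_mulVec_nonneg_of_real (Pi.single i₀ 1 - Pi.single i₁ 1)
  obtain ⟨hA₀₀, hA₀₁, hA₁₀, hA₁₁⟩ := twoByTwo_apply_of_ne hi x u
  obtain ⟨hB₀₀, hB₀₁, hB₁₀, hB₁₁⟩ := twoByTwo_apply_of_ne hi y v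
  simp only [dotProduct_mulVec_add_single, dotProduct_mulVec_sub_single, Matrix.sub_apply,
    Matrix.add_apply, Matrix.smul_apply, Matrix.map_apply, smul_eq_mul, hA₀₀, hA₀₁, hA₁₀, hA₁₁,
    hB₀₀, hB₀₁, hB₁₀, hB₁₁] at hw hz
  exact abs_le.mpr ⟨by linarith, by linarith⟩

lemma SConv.convexOn_comp_add_add_mul (hf : SConv a f n)
    (hn : 2 ≤ n) {β d σ : ℝ} (hβ : MemI a β) (hd : 0 ≤ d) (hσ : |σ| ≤ 1) :
    ConvexOn ℝ (Icc (-(d / 2)) (β - d)) fun x => f (x + d) + σ * f x := by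
  refine LinearOrder.convexOn_of_lt (convex_Icc _ _) fun x hx y hy hxy p q hp hq hpq => ?_
  obtain rfl : p = 1 - q := by linarith
  have hgap := hf.abs_gap_le hn (x := y + d) (y := x + d) (u := y) (v := x) (t := q)
    (abs_le.mpr ⟨by linarith [hx.1], by linarith⟩) (by rw [abs_of_pos (by linarith)]; linarith)
    (hβ.of_abs_le_s8 (abs_le.mpr ⟨by linarith [hx.1, hy.2], by linarith [hy.2]⟩)) hq.le (by linarith)
  have hσgap : |σ * (q * f y + (1 - q) * f x - f (q * y + (1 - q) * x))| ≤
      q * f (y + d) + (1 - q) * f (x + d) - f (q * (y + d) + (1 - q) * (x + d)) := by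
    rw [abs_mul]; exact (mul_le_of_le_one_left (abs_nonneg _) hσ).trans hgap
  have harg : q * (y + d) + (1 - q) * (x + d) = (1 - q) * x + q * y + d := by ring
  rw [harg, show q * y + (1 - q) * x = (1 - q) * x + q * y by ring] at hσgap
  simp only [smul_eq_mul]
  linarith [(abs_le.mp hσgap).1]

lemma SConv.differentiableWithinAt_Ioi (hf : SConv a f n)
    (hn : 2 ≤ n) {c : ℝ} (hc : MemI a c) : DifferentiableWithinAt ℝ f (Ioi c) c := by
  obtain ⟨β, hcβ, hβ⟩ := hc.exists_abs_lt
  obtain ⟨hcβ₁, hcβ₂⟩ := abs_lt.mp hcβ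
  obtain ⟨d, hd₁, hd₂⟩ : ∃ d, max 0 (-2 * c) < d ∧ d < β - c :=
    exists_between (max_lt (by linarith) (by linarith))
  obtain ⟨hd₀, hdc⟩ := max_lt_iff.mp hd₁
  have hmem : c ∈ interior (Icc (-(d / 2)) (β - d)) := by
    rw [interior_Icc]; constructor <;> linarith
  have hplus := (hf.convexOn_comp_add_add_mul hn hβ hd₀.le (σ := 1) (by simp))
    |>.differentiableWithinAt_Ioi_of_mem_interior hmem
  have hminus := (hf.convexOn_comp_add_add_mul hn hβ hd₀.le (σ := -1) (by simp))
    |>.differentiableWithinAt_Ioi_of_mem_interior hmem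
  exact ((hplus.sub hminus).const_mul (1 / 2)).congr (fun x _ => by simp only [Pi.sub_apply]; ring)
    (by simp only [Pi.sub_apply]; ring)

lemma SConv.differentiableAt (hf : SConv a f n) (hn : 2 ≤ n)
    {c : ℝ} (hc : MemI a c) : DifferentiableAt ℝ f c := by
  obtain ⟨β, hcβ, hβ⟩ := hc.exists_abs_lt
  obtain ⟨y, hcy, hyβ⟩ := exists_between hcβ
  have hy : MemI a y := hβ.of_abs_le_s8 (abs_le.mpr ⟨by linarith [abs_nonneg c], hyβ.le⟩)
  refine (hasDerivAt_of_abs_symmDiff_le (hf.differentiableWithinAt_Ioi hn hc).hasDerivWithinAt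
    (hf.differentiableWithinAt_Ioi hn hy) ?_).differentiableAt
  have hε : (0 : ℝ) < min (y - |c|) ((β - y) / 2) := lt_min (by linarith) (by linarith)
  filter_upwards [Ioo_mem_nhdsGT hε] with h ⟨hh₀, hh⟩
  obtain ⟨hh₁, hh₂⟩ := lt_min_iff.mp hh
  have hgap := hf.abs_gap_le hn (x := y + 2 * h) (y := y) (u := c + h) (v := c - h) (t := 1 / 2)
    (by linarith [abs_sub c h, abs_of_pos hh₀]) (by rw [abs_of_nonneg (by linarith)]; linarith)
    (hβ.of_abs_le_s8 (abs_le.mpr ⟨by linarith [abs_nonneg c], by linarith⟩)) (by norm_num)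
    (by norm_num)
  rw [show 1 / 2 * (c + h) + (1 - 1 / 2) * (c - h) = c by ring,
    show 1 / 2 * (y + 2 * h) + (1 - 1 / 2) * y = y + h by ring] at hgap
  obtain ⟨hgap₁, hgap₂⟩ := abs_le.mp hgap
  exact abs_le.mpr ⟨by linarith, by linarith⟩

lemma SConv.convexOn_quadOnRay (hf : SConv a f n) (hP : P.PosSemidef) (hD : D.PosSemidef)
    {h : ℝ} (hPD : ∀ s ∈ Icc 0 h, EntriesIn a (P + s • D)) (v : Fin n → ℝ) :
    ConvexOn ℝ (Icc 0 h) (quadOnRay f P D v) := by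
  refine LinearOrder.convexOn_of_lt (convex_Icc _ _) fun s hs r hr hsr p q hp hq hpq => ?_
  obtain rfl : p = 1 - q := by linarith
  have hPs : (P + s • D).PosSemidef := hP.add (hD.smul hs.1)
  have hPr : (P + r • D).PosSemidef := hP.add (hD.smul (hs.1.trans hsr.le))
  have hN := hf _ _ hPr.isSymm_of_real hPs.isSymm_of_real (hPD r hr) (hPD s hs) hPs
    (hD.add_smul_sub_add_smul P hsr.le) q hq.le (by linarith)
  have hquad := hN.dotProduct_mulVec_nonneg_of_real v
  rw [show q • (P + r • D) + (1 - q) • (P + s • D) = P + ((1 - q) • s + q • r) • D by module]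
    at hquad
  simp only [sub_mulVec, add_mulVec, smul_mulVec, dotProduct_sub, dotProduct_add,
    dotProduct_smul, smul_eq_mul] at hquad
  simp only [quadOnRay, smul_eq_mul] at hquad ⊢
  linarith

lemma SMono.convexOn_quadOnRay (hdiff : ∀ x, MemI a x → DifferentiableAt ℝ f x)
    (hm : SMono a (deriv f) n) (hP : P.PosSemidef) (hD : D.PosSemidef)
    {h : ℝ} (hPD : ∀ s ∈ Icc 0 h, EntriesIn a (P + s • D)) (v : Fin n → ℝ) :
    ConvexOn ℝ (Icc 0 h) (quadOnRay f P D v) := by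
  have hderiv (s) (hs : s ∈ Icc 0 h) := hasDerivAt_quadOnRay v fun i j => hdiff _ (hPD s hs i j)
  refine MonotoneOn.convexOn_of_deriv (convex_Icc 0 h)
    (fun s hs => (hderiv s hs).continuousAt.continuousWithinAt)
    (fun s hs => (hderiv s (interior_subset hs)).differentiableAt.differentiableWithinAt) ?_
  intro s hs r hr hsr
  rw [(hderiv s (interior_subset hs)).deriv, (hderiv r (interior_subset hr)).deriv]
  have hPs : (P + s • D).PosSemidef := hP.add (hD.smul (interior_subset hs).1)
  have hPr : (P + r • D).PosSemidef := hP.add (hD.smul (interior_subset hr).1)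
  have hΔ := hm _ _ hPr.isSymm_of_real hPs.isSymm_of_real (hPD r (interior_subset hr))
    (hPD s (interior_subset hs)) hPs (hD.add_smul_sub_add_smul P hsr)
  have hquad := (hΔ.hadamard hD).dotProduct_mulVec_nonneg_of_real v
  rw [sub_hadamard, sub_mulVec, dotProduct_sub] at hquad
  linarith

lemma sConv_of_convexOn_quadOnRay
    (h : ∀ B D : Matrix (Fin n) (Fin n) ℝ, B.PosSemidef → D.PosSemidef →
      (∀ s ∈ Icc (0 : ℝ) 1, EntriesIn a (B + s • D)) →
        ∀ v, ConvexOn ℝ (Icc 0 1) (quadOnRay f B D v)) :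
    SConv a f n := by
  intro A B hAs hBs hA hB hBpsd hABpsd t ht₀ ht₁
  have hpath (s) (hs : s ∈ Icc (0 : ℝ) 1) : EntriesIn a (B + s • (A - B)) :=
    (convex_setOf_entriesIn a n).add_smul_sub_mem hB hA hs
  have hsymm := (((hAs.map f).smul t).add ((hBs.map f).smul (1 - t))).sub
    (((hAs.smul t).add (hBs.smul (1 - t))).map f)
  refine posSemidef_of_isSymm_of_dotProduct_mulVec_nonneg hsymm fun v => ?_
  have hconv := (h B (A - B) hBpsd hABpsd hpath v).2 (right_mem_Icc.mpr zero_le_one)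
    (left_mem_Icc.mpr zero_le_one) ht₀ (sub_nonneg.mpr ht₁) (add_sub_cancel t 1)
  simp only [quadOnRay, smul_eq_mul, mul_one, mul_zero, add_zero, one_smul, zero_smul,
    add_sub_cancel] at hconv
  rw [show t • A + (1 - t) • B = B + t • (A - B) by module]
  simp only [sub_mulVec, add_mulVec, smul_mulVec, dotProduct_sub, dotProduct_add,
    dotProduct_smul, smul_eq_mul]
  linarith

lemma SConv.posSemidef_hadamard_map_deriv_sub (hf : SConv a f n)
    (hdiff : ∀ x, MemI a x → DifferentiableAt ℝ f x) (hP : P.PosSemidef) (hD : D.PosSemidef)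
    {h : ℝ} (hh : 0 ≤ h) (hPD : ∀ s ∈ Icc 0 h, EntriesIn a (P + s • D)) :
    (((P + h • D).map (deriv f) - P.map (deriv f)) ⊙ D).PosSemidef := by
  have hsymm := (((hP.add (hD.smul hh)).isSymm_of_real.map (deriv f)).sub
    (hP.isSymm_of_real.map (deriv f))).hadamard hD.isSymm_of_real
  refine posSemidef_of_isSymm_of_dotProduct_mulVec_nonneg hsymm fun v => ?_
  have hderiv (s) (hs : s ∈ Icc 0 h) := hasDerivAt_quadOnRay v fun i j => hdiff _ (hPD s hs i j)
  have hmono := (hf.convexOn_quadOnRay hP hD hPD v).monotoneOn_deriv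
    fun s hs => (hderiv s hs).differentiableAt
  have hle := hmono (left_mem_Icc.mpr hh) (right_mem_Icc.mpr hh) hh
  rw [(hderiv 0 (left_mem_Icc.mpr hh)).deriv, (hderiv h (right_mem_Icc.mpr hh)).deriv, zero_smul,
    add_zero] at hle
  rw [sub_hadamard, sub_mulVec, dotProduct_sub]
  linarith

/-- `vᵀ (f[C + t J] - f[C]) v` grows as `C` moves from `B` to `A`: its derivative along the
segment is `vᵀ ((f'[C + t J] - f'[C]) ⊙ (A - B)) v ≥ 0` by the previous lemma and Schur. -/
lemma SConv.quadOnRay_sub_le_quadOnRay_sub (hf : SConv a f n)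
    (hdiff : ∀ x, MemI a x → DifferentiableAt ℝ f x) (hBpsd : B.PosSemidef)
    (hABpsd : (A - B).PosSemidef) (hA : EntriesIn a A) (hB : EntriesIn a B) {t : ℝ} (ht : 0 < t)
    (hAt : EntriesIn a (A + t • of 1)) (hBt : EntriesIn a (B + t • of 1)) (v : Fin n → ℝ) :
    quadOnRay f A (of 1) v 0 - quadOnRay f B (of 1) v 0 ≤
      quadOnRay f A (of 1) v t - quadOnRay f B (of 1) v t := by
  have hentries (s) (hs : s ∈ Icc (0 : ℝ) 1) (r) (hr : r ∈ Icc 0 t) :=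
    EntriesIn.add_smul_sub_add_smul hA hB hAt hBt ht hs hr
  have hshift (s : ℝ) : B + t • of 1 + s • (A - B) = B + s • (A - B) + t • of 1 := by abel
  have hderiv (P) (hP : ∀ s ∈ Icc (0 : ℝ) 1, EntriesIn a (P + s • (A - B))) (s)
      (hs : s ∈ Icc (0 : ℝ) 1) :=
    hasDerivAt_quadOnRay (D := A - B) v fun i j => hdiff _ (hP s hs i j)
  have hderivB := hderiv B fun s hs => by simpa using hentries s hs 0 (left_mem_Icc.mpr ht.le)
  have hderivBt := hderiv (B + t • of 1) fun s hs => by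
    rw [hshift]; exact hentries s hs t (right_mem_Icc.mpr ht.le)
  have hmono : MonotoneOn
      (fun s => quadOnRay f (B + t • of 1) (A - B) v s - quadOnRay f B (A - B) v s) (Icc 0 1) := by
    refine monotoneOn_of_hasDerivWithinAt_nonneg (convex_Icc 0 1)
      (fun s hs => ((hderivBt s hs).sub (hderivB s hs)).continuousAt.continuousWithinAt)
      (fun s hs => ((hderivBt s (interior_subset hs)).sub
        (hderivB s (interior_subset hs))).hasDerivWithinAt) fun s hs => ?_
    have hs := interior_subset hs
    have hC : (B + s • (A - B)).PosSemidef := hBpsd.add (hABpsd.smul hs.1)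
    have hstep := hf.posSemidef_hadamard_map_deriv_sub hdiff hC posSemidef_of_one ht.le (hentries s hs)
    rw [hadamard_of_one] at hstep
    have hquad := (hstep.hadamard hABpsd).dotProduct_mulVec_nonneg_of_real v
    rw [sub_hadamard, sub_mulVec, dotProduct_sub, ← hshift] at hquad
    linarith
  have h01 := hmono (left_mem_Icc.mpr zero_le_one) (right_mem_Icc.mpr zero_le_one) zero_le_one
  simp only [quadOnRay, zero_smul, add_zero, one_smul, add_sub_cancel] at h01 ⊢
  rw [show B + t • of 1 + (A - B) = A + t • of 1 by abel] at h01
  linarith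

lemma SConv.sMono_deriv (hf : SConv a f n) (hdiff : ∀ x, MemI a x → DifferentiableAt ℝ f x) :
    SMono a (deriv f) n := by
  intro A B hAs hBs hA hB hBpsd hABpsd
  refine posSemidef_of_isSymm_of_dotProduct_mulVec_nonneg ((hAs.map _).sub (hBs.map _)) fun v => ?_
  have hgA := hasDerivAt_quadOnRay (s := 0) (D := of 1) v fun i j => hdiff _ (by simpa using hA i j)
  have hgB := hasDerivAt_quadOnRay (s := 0) (D := of 1) v fun i j => hdiff _ (by simpa using hB i j)
  have hg := hgA.sub hgB
  simp only [zero_smul, add_zero, hadamard_of_one] at hg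
  rw [sub_mulVec, dotProduct_sub]
  refine ge_of_tendsto hg.tendsto_slope_zero_right ?_
  filter_upwards [nhdsWithin_le_nhds ((hA.eventually_add_smul (of 1)).and
    (hB.eventually_add_smul (of 1))), self_mem_nhdsWithin] with t ⟨hAt, hBt⟩ (ht : 0 < t)
  have hle := hf.quadOnRay_sub_le_quadOnRay_sub hdiff hBpsd hABpsd hA hB ht hAt hBt v
  simpa using smul_nonneg (inv_nonneg.mpr ht.le) (sub_nonneg.mpr hle)

end SConv

theorem stmt_8_general (a : EReal) (n : ℕ) (hn : 2 ≤ n) (f : ℝ → ℝ) :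
    SConv a f n ↔
      ((∀ x, MemI a x → DifferentiableAt ℝ f x) ∧ SMono a (deriv f) n) := by
  refine ⟨fun hf => ?_, fun ⟨hdiff, hm⟩ => ?_⟩
  · have hdiff (x : ℝ) (hx : MemI a x) : DifferentiableAt ℝ f x := hf.differentiableAt hn hx
    exact ⟨hdiff, hf.sMono_deriv hdiff⟩
  · exact sConv_of_convexOn_quadOnRay fun B D hB hD hBD v =>
      hm.convexOn_quadOnRay hdiff hB hD hBD v

/-- Theorem 3.2 (1): for `n ≥ 2`, `f` is S-convex of order `n` on `(-α, α)` iff `f` is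
differentiable on `(-α, α)` and `f'` is S-monotone of order `n`. -/
theorem stmt_8 (a : EReal) (ha : 0 < a) (n : ℕ) (hn : 2 ≤ n) (f : ℝ → ℝ) :
    SConv a f n ↔
      ((∀ x, MemI a x → DifferentiableAt ℝ f x) ∧ SMono a (deriv f) n) :=
  stmt_8_general a n hn f
end
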